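/- arXiv:2511.12253 — 5 statements merged into one kernel-verified Lean document; each statement's English description precedes it below -/
import Mathlib

section
/- The support of the generator arbNat is all of ℕ; that is, for every natural number a, a ∈ ⟦arbNat⟧. -/
namespace PBT

inductive Gen : Type → Type 1 where
  | pure {α : Type} : α → Gen α
  | pick {α : Type} : Gen α → Gen α → Gen α
  | bind {α β : Type} : Gen α → (α → Gen β) → Gen β
  | indexed {α : Type} : (ℕ → Gen (Option α)) → Gen α
  | assume {α : Type} : (b : Bool) → (b = true → Gen α) → Gen α

instance : Pure Gen := ⟨Gen.pure⟩
instance : Bind Gen := ⟨Gen.bind⟩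

def Gen.support : {α : Type} → Gen α → Set α
  | _, .pure a' => {a | a = a'}
  | _, .pick x y => {a | a ∈ x.support ∨ a ∈ y.support}
  | _, .bind x f => {a | ∃ a', a' ∈ x.support ∧ a ∈ (f a').support}
  | _, .indexed f => {a | (∃ n, some a ∈ (f n).support) ∧
      (∀ a' n, some a' ∈ (f n).support → some a' ∈ (f (n + 1)).support)}
  | _, .assume b k => {a | ∃ h : b = true, a ∈ (k h).support}

notation (priority := high) "⟦" g "⟧" => Gen.support g

def arbNat.go : ℕ → Gen (Option ℕ)
  | 0 => .pure none
  | fuel + 1 =>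
    .pick (.pure (some 0))
      (arbNat.go fuel >>= fun on' =>
        match on' with
        | none => .pure none
        | some n' => .pure (some (1 + n')))

def arbNat : Gen ℕ := .indexed arbNat.go

theorem some_mem_support_arbNat_go {k n : ℕ} : some k ∈ ⟦arbNat.go n⟧ ↔ k < n := by
  induction n generalizing k with
  | zero => simp [arbNat.go, Gen.support]
  | succ n ih =>
    simp only [arbNat.go, bind, Gen.support, Set.mem_ofPred_eq]
    constructor
    · rintro (hk | ⟨_ | k', hk', hk⟩)
      · cases hk
        exact n.succ_pos
      · cases hk
      · cases hk
        have := ih.1 hk'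
        omega
    · intro hk
      rcases k with _ | k
      · exact Or.inl rfl
      · exact Or.inr ⟨some k, ih.2 (by omega), congrArg some (Nat.add_comm k 1)⟩

theorem arbNat_support (a : ℕ) : a ∈ ⟦arbNat⟧ := by
  refine ⟨⟨a + 1, some_mem_support_arbNat_go.2 a.lt_add_one⟩, fun _ _ h => ?_⟩
  rw [some_mem_support_arbNat_go] at h ⊢
  omega

end PBT
end

section
/- (Less Than Support) If 0 < hi, then for every natural number a, a ∈ ⟦lessThan hi⟧ ↔ a < hi. -/
namespace PBT

def choose (lo hi : ℕ) : Gen ℕ :=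
  if hi ≤ lo then .pure lo else .pick (.pure lo) (choose (lo + 1) hi)
termination_by hi - lo
decreasing_by omega

def lessThan (hi : ℕ) : Gen ℕ := choose 0 (hi - 1)

theorem choose_support (lo hi a : ℕ) (h : lo ≤ hi) :
    a ∈ ⟦choose lo hi⟧ ↔ lo ≤ a ∧ a ≤ hi := by
  induction lo using choose.induct hi with
  | case1 lo hle =>
    rw [choose, if_pos hle]
    simp [Gen.support]; omega
  | case2 lo hle ih =>
    rw [choose, if_neg hle]
    simp only [Gen.support, Set.mem_setOf_eq] at *
    rw [ih (by omega)]
    omega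

theorem lessThan_support (hi : ℕ) (h : 0 < hi) (a : ℕ) :
    a ∈ ⟦lessThan hi⟧ ↔ a < hi := by
  rw [lessThan, choose_support 0 (hi-1) a (by omega)]; omega

end PBT
end

section
/- (Optimization rule 4 is support-preserving) For any x : Gen α, b : Bool not depending on the bound variable, and k : b = true → α → Gen β, the generators x >>= (fun a => assume b (fun h => k h a)) and assume b (fun h => x >>= k h) have the same support: for all c, c ∈ ⟦x >>= (fun a => assume b (fun h => k h a))⟧ ↔ c ∈ ⟦assume b (fun h => x >>= k h)⟧. -/
namespace PBT

theorem Gen.mem_support_bind {α β : Type} (x : Gen α) (f : α → Gen β) (c : β) :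
    c ∈ ⟦x >>= f⟧ ↔ ∃ a, a ∈ ⟦x⟧ ∧ c ∈ ⟦f a⟧ :=
  Iff.rfl

theorem Gen.mem_support_assume {α : Type} (b : Bool) (k : b = true → Gen α) (c : α) :
    c ∈ ⟦Gen.assume b k⟧ ↔ ∃ h : b = true, c ∈ ⟦k h⟧ :=
  Iff.rfl

theorem opt_rule4_support {α β : Type} (x : Gen α) (b : Bool) (k : b = true → α → Gen β)
    (c : β) :
    c ∈ ⟦x >>= fun a => Gen.assume b (fun h => k h a)⟧ ↔
      c ∈ ⟦Gen.assume b (fun h => x >>= k h)⟧ := by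
  simp only [Gen.mem_support_bind, Gen.mem_support_assume]
  exact ⟨fun ⟨a, ha, h, hc⟩ => ⟨h, a, ha, hc⟩, fun ⟨h, a, ha, hc⟩ => ⟨a, ha, h, hc⟩⟩

end PBT
end

section
/- (Correctness of S-Choose⊥) For all natural numbers lo and hi (without assuming lo ≤ hi), the generator assume (decide (lo ≤ hi)) (fun _ => choose lo hi) is a correct generator for the predicate fun v => lo ≤ v ∧ v ≤ hi; that is, for every natural number a, a ∈ ⟦assume (decide (lo ≤ hi)) (fun _ => choose lo hi)⟧ ↔ (lo ≤ a ∧ a ≤ hi). -/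
namespace PBT

namespace Gen

variable {α : Type}

@[simp]
theorem mem_support_pure {a a' : α} : a ∈ ⟦Gen.pure a'⟧ ↔ a = a' := Iff.rfl

@[simp]
theorem mem_support_pick {a : α} {x y : Gen α} : a ∈ ⟦x.pick y⟧ ↔ a ∈ ⟦x⟧ ∨ a ∈ ⟦y⟧ := Iff.rfl

@[simp]
theorem mem_support_assume_s14 {a : α} {b : Bool} {k : b = true → Gen α} :
    a ∈ ⟦Gen.assume b k⟧ ↔ ∃ h : b = true, a ∈ ⟦k h⟧ := Iff.rfl

end Gen

theorem choose_of_le {lo hi : ℕ} (h : hi ≤ lo) : choose lo hi = .pure lo := by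
  rw [choose, if_pos h]

theorem choose_of_lt {lo hi : ℕ} (h : lo < hi) :
    choose lo hi = .pick (.pure lo) (choose (lo + 1) hi) := by
  rw [choose, if_neg (Nat.not_le.mpr h)]

theorem mem_support_choose {lo hi a : ℕ} (h : lo ≤ hi) :
    a ∈ ⟦choose lo hi⟧ ↔ lo ≤ a ∧ a ≤ hi := by
  rcases h.eq_or_lt with rfl | hlt
  · rw [choose_of_le le_rfl, Gen.mem_support_pure]
    omega
  · rw [choose_of_lt hlt, Gen.mem_support_pick, Gen.mem_support_pure, mem_support_choose hlt]
    omega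
termination_by hi - lo

theorem s_choose_partial_correct (lo hi : ℕ) (a : ℕ) :
    a ∈ ⟦Gen.assume (decide (lo ≤ hi)) (fun _ => choose lo hi)⟧ ↔ lo ≤ a ∧ a ≤ hi := by
  simp only [Gen.mem_support_assume_s14, decide_eq_true_eq]
  exact ⟨fun ⟨h, ha⟩ => (mem_support_choose h).1 ha,
    fun ha => ⟨ha.1.trans ha.2, (mem_support_choose (ha.1.trans ha.2)).2 ha⟩⟩

end PBT
end

section
/- (Correctness of genLengthK) For every natural number k and every list xs of natural numbers, xs ∈ ⟦genLengthK k⟧ ↔ xs.length = k. -/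
namespace PBT

def listUnfold.go {α β : Type} (g : β → Gen (Option (α × β))) : β → ℕ → Gen (Option (List α))
  | _, 0 => .pure none
  | b, fuel + 1 =>
    g b >>= fun step =>
      match step with
      | none => .pure (some [])
      | some (x, b') =>
        listUnfold.go g b' fuel >>= fun mxs =>
          match mxs with
          | none => .pure none
          | some xs => .pure (some (x :: xs))

def listUnfold {α β : Type} (g : β → Gen (Option (α × β))) (b : β) : Gen (List α) :=
  .indexed (listUnfold.go g b)

def genLengthK (k : ℕ) : Gen (List ℕ) :=
  listUnfold
    (fun n =>
      match n with
      | 0 => .pure none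
      | k' + 1 => arbNat >>= fun x => .pure (some (x, k')))
    k

/-!
Both `arbNat` and `listUnfold` are `indexed` generators whose fuel-`n` approximation produces
`some a` exactly when `a` is admissible and its fuel cost is below `n`. Such approximations are
monotone in the fuel, so the support of the `indexed` generator is the set of admissible values.
For `arbNat` the cost of `m` is `m`; for the countdown unfold behind `genLengthK k` the admissible
values are the lists of length `k` and the cost is `k`.
-/

namespace Gen

variable {α β : Type}

@[simp]
lemma mem_pure {a b : α} : a ∈ ⟦(Gen.pure b : Gen α)⟧ ↔ a = b := Iff.rfl

@[simp]
lemma mem_pick {x y : Gen α} {a : α} : a ∈ ⟦Gen.pick x y⟧ ↔ a ∈ ⟦x⟧ ∨ a ∈ ⟦y⟧ := Iff.rfl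

@[simp]
lemma mem_bind {x : Gen α} {f : α → Gen β} {b : β} :
    b ∈ ⟦x >>= f⟧ ↔ ∃ a, a ∈ ⟦x⟧ ∧ b ∈ ⟦f a⟧ := Iff.rfl

lemma mem_indexed_iff_of_mem_iff_lt {f : ℕ → Gen (Option α)} (p : α → Prop) (cost : α → ℕ)
    (hf : ∀ n a, some a ∈ ⟦f n⟧ ↔ p a ∧ cost a < n) (a : α) :
    a ∈ ⟦Gen.indexed f⟧ ↔ p a := by
  refine ⟨fun ⟨⟨n, ha⟩, _⟩ => ((hf n a).1 ha).1, fun ha => ⟨⟨cost a + 1, ?_⟩, ?_⟩⟩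
  · exact (hf _ a).2 ⟨ha, Nat.lt_succ_self _⟩
  · intro a' n h
    obtain ⟨ha', hlt⟩ := (hf n a').1 h
    exact (hf _ a').2 ⟨ha', Nat.lt_succ_of_lt hlt⟩

end Gen

lemma arbNat.mem_go_iff (n m : ℕ) : some m ∈ ⟦arbNat.go n⟧ ↔ m < n := by
  induction n generalizing m with
  | zero => simp [arbNat.go]
  | succ n ih =>
    rw [arbNat.go, Gen.mem_pick, Gen.mem_pure, Gen.mem_bind]
    constructor
    · rintro (h | ⟨_ | m', hm', h⟩)
      · simp_all
      · simp at h
      · simp only [Gen.mem_pure, Option.some.injEq] at h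
        have := (ih m').1 hm'
        omega
    · intro h
      cases m with
      | zero => exact Or.inl rfl
      | succ m => exact Or.inr ⟨some m, (ih m).2 (by omega), by simp [Nat.add_comm]⟩

lemma mem_arbNat (m : ℕ) : m ∈ ⟦arbNat⟧ :=
  (Gen.mem_indexed_iff_of_mem_iff_lt (fun _ => True) id
    (fun n m => by simp [arbNat.mem_go_iff]) m).2 trivial

namespace listUnfold

variable {α β : Type} (g : β → Gen (Option (α × β)))

lemma not_mem_go_zero (b : β) (xs : List α) : some xs ∉ ⟦listUnfold.go g b 0⟧ := by
  simp [listUnfold.go]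

lemma mem_go_succ_iff (b : β) (n : ℕ) (xs : List α) :
    some xs ∈ ⟦listUnfold.go g b (n + 1)⟧ ↔
      (none ∈ ⟦g b⟧ ∧ xs = []) ∨
        ∃ x b' ys, some (x, b') ∈ ⟦g b⟧ ∧ some ys ∈ ⟦listUnfold.go g b' n⟧ ∧ xs = x :: ys := by
  rw [listUnfold.go, Gen.mem_bind]
  constructor
  · rintro ⟨_ | ⟨x, b'⟩, hstep, h⟩
    · simp only [Gen.mem_pure, Option.some.injEq] at h
      exact Or.inl ⟨hstep, h⟩
    · obtain ⟨_ | ys, hys, h⟩ := Gen.mem_bind.1 h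
      · simp at h
      · simp only [Gen.mem_pure, Option.some.injEq] at h
        exact Or.inr ⟨x, b', ys, hstep, hys, h⟩
  · rintro (⟨hstep, rfl⟩ | ⟨x, b', ys, hstep, hys, rfl⟩)
    · exact ⟨none, hstep, rfl⟩
    · exact ⟨some (x, b'), hstep, some ys, hys, rfl⟩

end listUnfold

def countdownStep {α : Type} (x : Gen α) : ℕ → Gen (Option (α × ℕ))
  | 0 => .pure none
  | k' + 1 => x >>= fun y => .pure (some (y, k'))

section countdownStep

variable {α : Type} (x : Gen α)

lemma none_mem_countdownStep_iff (k : ℕ) : none ∈ ⟦countdownStep x k⟧ ↔ k = 0 := by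
  cases k <;> simp [countdownStep]

lemma some_mem_countdownStep_iff (k k' : ℕ) (y : α) :
    some (y, k') ∈ ⟦countdownStep x k⟧ ↔ y ∈ ⟦x⟧ ∧ k = k' + 1 := by
  cases k <;> simp [countdownStep, eq_comm]

lemma mem_go_countdownStep_iff (k n : ℕ) (xs : List α) :
    some xs ∈ ⟦listUnfold.go (countdownStep x) k n⟧ ↔
      (xs.length = k ∧ ∀ y ∈ xs, y ∈ ⟦x⟧) ∧ k < n := by
  induction n generalizing k xs with
  | zero => simpa using listUnfold.not_mem_go_zero _ k xs
  | succ n ih =>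
    simp only [listUnfold.mem_go_succ_iff, none_mem_countdownStep_iff,
      some_mem_countdownStep_iff, ih]
    constructor
    · rintro (⟨rfl, rfl⟩ | ⟨y, k', ys, ⟨hy, rfl⟩, ⟨⟨rfl, hys⟩, hlt⟩, rfl⟩)
      · simp
      · simp_all
    · rintro ⟨⟨hlen, hmem⟩, hlt⟩
      cases xs with
      | nil => exact Or.inl ⟨hlen.symm, rfl⟩
      | cons y ys =>
        simp only [List.length_cons, List.mem_cons, forall_eq_or_imp] at hlen hmem
        exact Or.inr ⟨y, ys.length, ys, ⟨hmem.1, hlen.symm⟩, ⟨⟨rfl, hmem.2⟩, by omega⟩, rfl⟩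

lemma mem_listUnfold_countdownStep_iff (k : ℕ) (xs : List α) :
    xs ∈ ⟦listUnfold (countdownStep x) k⟧ ↔ xs.length = k ∧ ∀ y ∈ xs, y ∈ ⟦x⟧ :=
  Gen.mem_indexed_iff_of_mem_iff_lt (f := listUnfold.go (countdownStep x) k)
    (fun xs => xs.length = k ∧ ∀ y ∈ xs, y ∈ ⟦x⟧) (fun _ => k) (mem_go_countdownStep_iff x k) xs

end countdownStep

theorem genLengthK_correct (k : ℕ) (xs : List ℕ) :
    xs ∈ ⟦genLengthK k⟧ ↔ xs.length = k := by
  change xs ∈ ⟦listUnfold (countdownStep arbNat) k⟧ ↔ _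
  simp [mem_listUnfold_countdownStep_iff, mem_arbNat]

end PBT
end
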